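/- Let (κ, k) be a Sonine pair from the class L₁ and let (b_j)_{j≥0} be a real sequence such that the power series Σ_{j=0}^∞ b_j z^j has positive radius of convergence. Let y(t) = Σ_{j=0}^∞ b_j κ^{⟨j+1⟩}(t). Then for every t > 0 the function s ↦ (k ∗ y)(s) is differentiable at t and (𝔻_{(k)} y)(t) = d/dt (k ∗ y)(t) = Σ_{j=0}^∞ b_{j+1} κ^{⟨j+1⟩}(t). -/

import Mathlib

/-- The Laplace convolution `(f ∗ g)(t) = ∫_0^t f(t−τ) g(τ) dτ`. -/
noncomputable def lconv (f g : ℝ → ℝ) : ℝ → ℝ :=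
  fun t => ∫ τ in (0:ℝ)..t, f (t - τ) * g τ

/-- `convNPow f j` is the `(j+1)`-st convolution power `f^{⟨j+1⟩}`
(so `convNPow f 0 = f^{⟨1⟩} = f`). -/
noncomputable def convNPow (f : ℝ → ℝ) : ℕ → ℝ → ℝ
  | 0 => f
  | j + 1 => lconv f (convNPow f j)

/-- The power series `Σ a_j z^j` has a positive radius of convergence. -/
def PosRadius (a : ℕ → ℝ) : Prop :=
  ∃ r : ℝ, 0 < r ∧ Summable fun j => |a j| * r ^ j

/-- Membership in the space `C_{−1}(0,∞)`:
`f(t) = t^r f₁(t)` with `r > −1` and `f₁` continuous on `[0,∞)`. -/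
def InCm1 (f : ℝ → ℝ) : Prop :=
  ∃ (r : ℝ) (f₁ : ℝ → ℝ), -1 < r ∧ ContinuousOn f₁ (Set.Ici (0:ℝ)) ∧
    ∀ t, 0 < t → f t = t ^ r * f₁ t

/-- `(κ, k)` is a Sonine pair from the class `L₁`. -/
def SoninePairL1 (κ k : ℝ → ℝ) : Prop :=
  (∃ (p : ℝ) (κ₁ : ℝ → ℝ), 0 < p ∧ p < 1 ∧ ContinuousOn κ₁ (Set.Ici (0:ℝ)) ∧
      ∀ t, 0 < t → κ t = t ^ (p - 1) * κ₁ t) ∧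
  (∃ (q : ℝ) (k₁ : ℝ → ℝ), 0 < q ∧ q < 1 ∧ ContinuousOn k₁ (Set.Ici (0:ℝ)) ∧
      ∀ t, 0 < t → k t = t ^ (q - 1) * k₁ t) ∧
  (∀ t, 0 < t → lconv κ k t = 1)

/-- The general fractional derivative of Riemann–Liouville type:
`(𝔻_{(k)} f)(t) = d/dt (k ∗ f)(t)`. -/
noncomputable def gfdRL (k : ℝ → ℝ) (f : ℝ → ℝ) : ℝ → ℝ :=
  deriv (lconv k f)

/-- The general fractional derivative of Caputo type:
`(∗𝔻_{(k)} g)(t) = d/dt (k ∗ g)(t) − g(0+) k(t)` where `g(0+)` is the limit of `g` at `0` from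
the right. -/
noncomputable def gfdC (k : ℝ → ℝ) (g : ℝ → ℝ) : ℝ → ℝ :=
  fun t => deriv (lconv k g) t - (Filter.limUnder (nhdsWithin 0 (Set.Ioi 0)) g) * k t


open MeasureTheory intervalIntegral Set Filter
open scoped Topology
set_option maxHeartbeats 1600000

noncomputable def betaI (a b : ℝ) : ℝ := ∫ x in (0:ℝ)..1, x ^ (a-1) * (1-x) ^ (b-1)

lemma betaI_complex {a b : ℝ} (ha : 0 < a) (hb : 0 < b) :
    Complex.betaIntegral a b = (betaI a b : ℂ) := by
  rw [Complex.betaIntegral, betaI, ← intervalIntegral.integral_ofReal]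
  refine intervalIntegral.integral_congr (fun x hx => ?_)
  rw [uIcc_of_le (by norm_num : (0:ℝ) ≤ 1)] at hx
  push_cast
  rw [Complex.ofReal_cpow hx.1, Complex.ofReal_cpow (by linarith [hx.2]), ]
  push_cast
  ring

lemma betaI_integrableOn {a b : ℝ} (ha : 0 < a) (hb : 0 < b) :
    IntegrableOn (fun x : ℝ => x ^ (a-1) * (1-x) ^ (b-1)) (Ioc (0:ℝ) 1) := by
  have h := Complex.betaIntegral_convergent (u := (a:ℂ)) (v := (b:ℂ)) (by simpa) (by simpa)
  have h2 : IntegrableOn (fun x : ℝ => (x:ℂ) ^ ((a:ℂ)-1) * (1-(x:ℂ)) ^ ((b:ℂ)-1)) (Ioc (0:ℝ) 1) :=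
    h.1
  have h3 : IntegrableOn (fun x : ℝ => ((x:ℂ) ^ ((a:ℂ)-1) * (1-(x:ℂ)) ^ ((b:ℂ)-1)).re) (Ioc (0:ℝ) 1) := h2.re
  refine IntegrableOn.congr_fun h3 (fun x hx => ?_) measurableSet_Ioc
  have h0 : (0:ℝ) ≤ x := hx.1.le
  clear h3 h2 h
  have h1 : (0:ℝ) ≤ 1 - x := by linarith [hx.2]
  rw [show ((a:ℂ)-1) = ((a-1:ℝ):ℂ) by push_cast; ring,
      show ((b:ℂ)-1) = ((b-1:ℝ):ℂ) by push_cast; ring,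
      show (1-(x:ℂ)) = ((1-x:ℝ):ℂ) by push_cast; ring,
      ← Complex.ofReal_cpow h0, ← Complex.ofReal_cpow h1, ← Complex.ofReal_mul,
      Complex.ofReal_re]

lemma betaK_intervalIntegrable {a b s : ℝ} (ha : 0 < a) (hb : 0 < b) (hs : 0 < s) :
    IntervalIntegrable (fun τ => τ ^ (a-1) * (s-τ) ^ (b-1)) volume 0 s := by
  have h1 : IntervalIntegrable (fun x : ℝ => x ^ (a-1) * (1-x) ^ (b-1)) volume 0 1 :=
    (intervalIntegrable_iff_integrableOn_Ioc_of_le (by norm_num)).2 (betaI_integrableOn ha hb)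
  have h2 := (h1.comp_mul_left (c := s⁻¹)).const_mul (s ^ (a-1) * s ^ (b-1))
  rw [intervalIntegrable_iff_integrableOn_Ioc_of_le hs.le]
  rw [show (0:ℝ)/s⁻¹ = 0 by simp, show (1:ℝ)/s⁻¹ = s by simp] at h2
  rw [intervalIntegrable_iff_integrableOn_Ioc_of_le hs.le] at h2
  refine h2.congr_fun (fun τ hτ => ?_) measurableSet_Ioc
  have h0 : (0:ℝ) ≤ τ := hτ.1.le
  have h3 : (0:ℝ) ≤ s - τ := by linarith [hτ.2]
  have e1 : (s⁻¹ * τ) ^ (a-1) = s⁻¹ ^ (a-1) * τ ^ (a-1) :=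
    Real.mul_rpow (by positivity) h0
  have e2 : (1 - s⁻¹ * τ) = s⁻¹ * (s - τ) := by field_simp
  have e3 : (s⁻¹ * (s-τ)) ^ (b-1) = s⁻¹ ^ (b-1) * (s-τ) ^ (b-1) :=
    Real.mul_rpow (by positivity) h3
  dsimp only
  rw [e1, e2, e3, Real.inv_rpow hs.le, Real.inv_rpow hs.le]
  have hsa : s ^ (a-1) ≠ 0 := by positivity
  have hsb : s ^ (b-1) ≠ 0 := by positivity
  field_simp

lemma betaI_scaled {a b s : ℝ} (ha : 0 < a) (hb : 0 < b) (hs : 0 < s) :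
    ∫ τ in (0:ℝ)..s, τ ^ (a-1) * (s-τ) ^ (b-1) = s ^ (a+b-1) * betaI a b := by
  have hc := Complex.betaIntegral_scaled (a:ℂ) (b:ℂ) hs
  have hl : (∫ x in (0:ℝ)..s, (x:ℂ) ^ ((a:ℂ)-1) * ((s:ℂ) - x) ^ ((b:ℂ)-1)) =
      ((∫ τ in (0:ℝ)..s, τ ^ (a-1) * (s-τ) ^ (b-1) : ℝ) : ℂ) := by
    rw [← intervalIntegral.integral_ofReal]
    refine intervalIntegral.integral_congr (fun x hx => ?_)
    rw [uIcc_of_le hs.le] at hx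
    have h0 : (0:ℝ) ≤ x := hx.1
    have h1 : (0:ℝ) ≤ s - x := by linarith [hx.2]
    push_cast
    rw [Complex.ofReal_cpow h0, Complex.ofReal_cpow h1]
    push_cast
    ring
  rw [hl, betaI_complex ha hb] at hc
  have hr : ((s:ℂ)) ^ ((a:ℂ) + b - 1) = ((s ^ (a+b-1) : ℝ) : ℂ) := by
    rw [Complex.ofReal_cpow hs.le]
    push_cast
    ring_nf
  rw [hr, ← Complex.ofReal_mul] at hc
  exact_mod_cast hc

lemma betaI_nonneg {a b : ℝ} : 0 ≤ betaI a b := by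
  refine intervalIntegral.integral_nonneg (by norm_num) (fun u hu => ?_)
  exact mul_nonneg (Real.rpow_nonneg hu.1 _) (Real.rpow_nonneg (by linarith [hu.2]) _)

lemma betaI_le {p b : ℝ} (hp : 0 < p) (hp1 : p < 1) (hb : 1 ≤ b) :
    betaI p b ≤ (1/p + 1) * b ^ (-p) := by
  have hb0 : (0:ℝ) < b := by linarith
  have hint : IntervalIntegrable (fun x : ℝ => x ^ (p-1) * (1-x) ^ (b-1)) volume 0 1 :=
    (intervalIntegrable_iff_integrableOn_Ioc_of_le (by norm_num)).2 (betaI_integrableOn hp hb0)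
  have hmem : (1/b) ∈ Set.uIcc (0:ℝ) 1 := by
    rw [uIcc_of_le (by norm_num)]
    constructor
    · positivity
    · rw [div_le_one hb0]; linarith
  have hi1 : IntervalIntegrable (fun x : ℝ => x ^ (p-1) * (1-x) ^ (b-1)) volume 0 (1/b) :=
    hint.mono_set (by rw [uIcc_of_le (by positivity : (0:ℝ) ≤ 1/b), uIcc_of_le (by norm_num : (0:ℝ) ≤ 1)]; exact Icc_subset_Icc le_rfl (by rw [div_le_one hb0]; linarith))
  have hi2 : IntervalIntegrable (fun x : ℝ => x ^ (p-1) * (1-x) ^ (b-1)) volume (1/b) 1 := by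
    refine hint.mono_set ?_
    rw [uIcc_of_le (by rw [div_le_one hb0]; linarith : (1:ℝ)/b ≤ 1), uIcc_of_le (by norm_num : (0:ℝ) ≤ 1)]
    exact Icc_subset_Icc (by positivity) le_rfl
  have hsplit : betaI p b = (∫ x in (0:ℝ)..(1/b), x ^ (p-1) * (1-x) ^ (b-1))
      + ∫ x in (1/b)..(1:ℝ), x ^ (p-1) * (1-x) ^ (b-1) := by
    rw [betaI, ← intervalIntegral.integral_add_adjacent_intervals hi1 hi2]
  have hxfacts : ∀ x : ℝ, x ∈ Icc (0:ℝ) (1/b) → (0:ℝ) ≤ x ∧ 0 ≤ 1 - x := by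
    intro x hx
    have h1 : x ≤ 1/b := hx.2
    have h2 : (1:ℝ)/b ≤ 1 := by rw [div_le_one hb0]; exact hb
    exact ⟨hx.1, by linarith⟩
  have hpiece1 : (∫ x in (0:ℝ)..(1/b), x ^ (p-1) * (1-x) ^ (b-1)) ≤ (1/p) * b ^ (-p) := by
    have hle : (∫ x in (0:ℝ)..(1/b), x ^ (p-1) * (1-x) ^ (b-1)) ≤
        ∫ x in (0:ℝ)..(1/b), x ^ (p-1) := by
      refine intervalIntegral.integral_mono_on (by positivity) hi1
        (intervalIntegral.intervalIntegrable_rpow' (by linarith)) (fun x hx => ?_)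
      obtain ⟨h0, h1⟩ := hxfacts x hx
      have h1x : (1-x) ^ (b-1) ≤ 1 := Real.rpow_le_one h1 (by linarith) (by linarith)
      calc x ^ (p-1) * (1-x) ^ (b-1) ≤ x ^ (p-1) * 1 :=
            mul_le_mul_of_nonneg_left h1x (Real.rpow_nonneg h0 _)
        _ = x ^ (p-1) := mul_one _
    have hval : (∫ x in (0:ℝ)..(1/b), x ^ (p-1)) = (1/b) ^ p / p := by
      rw [integral_rpow (Or.inl (by linarith : (-1:ℝ) < p - 1))]
      rw [Real.zero_rpow (by linarith : p - 1 + 1 ≠ 0)]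
      rw [show p - 1 + 1 = p by ring]
      ring
    have hconv : (1/b : ℝ) ^ p = b ^ (-p) := by
      rw [one_div, Real.inv_rpow hb0.le, Real.rpow_neg hb0.le]
    rw [hval, hconv] at hle
    calc (∫ x in (0:ℝ)..(1/b), x ^ (p-1) * (1-x) ^ (b-1)) ≤ b ^ (-p) / p := hle
      _ = (1/p) * b ^ (-p) := by ring
  have hpiece2 : (∫ x in (1/b)..(1:ℝ), x ^ (p-1) * (1-x) ^ (b-1)) ≤ b ^ (-p) := by
    have hb1 : (1:ℝ)/b ≤ 1 := by rw [div_le_one hb0]; exact hb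
    have h0b : (0:ℝ) < 1/b := by positivity
    have hi3 : IntervalIntegrable (fun x : ℝ => (1-x) ^ (b-1)) volume (1/b) 1 := by
      have h4 : IntervalIntegrable (fun u : ℝ => u ^ (b-1)) volume 0 (1-1/b) :=
        intervalIntegral.intervalIntegrable_rpow' (by linarith)
      have h5 := h4.comp_sub_left 1
      simpa using h5.symm
    have hle : (∫ x in (1/b)..(1:ℝ), x ^ (p-1) * (1-x) ^ (b-1)) ≤
        ∫ x in (1/b)..(1:ℝ), (1/b) ^ (p-1) * (1-x) ^ (b-1) := by
      refine intervalIntegral.integral_mono_on hb1 hi2 (hi3.const_mul _) (fun x hx => ?_)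
      have hx1 : x ^ (p-1) ≤ (1/b) ^ (p-1) :=
        Real.rpow_le_rpow_of_nonpos h0b hx.1 (by linarith)
      exact mul_le_mul_of_nonneg_right hx1 (Real.rpow_nonneg (by linarith [hx.2]) _)
    have hval : (∫ x in (1/b)..(1:ℝ), (1-x) ^ (b-1)) = (1 - 1/b) ^ b / b := by
      rw [intervalIntegral.integral_comp_sub_left (fun u : ℝ => u ^ (b-1)) 1]
      rw [sub_self]
      rw [integral_rpow (Or.inl (by linarith : (-1:ℝ) < b - 1))]
      rw [Real.zero_rpow (by linarith : b - 1 + 1 ≠ 0), show b - 1 + 1 = b by ring]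
      ring
    have hval2 : (∫ x in (1/b)..(1:ℝ), (1/b) ^ (p-1) * (1-x) ^ (b-1))
        = (1/b) ^ (p-1) * ((1 - 1/b) ^ b / b) := by
      rw [intervalIntegral.integral_const_mul, hval]
    have hbd : (1 - 1/b) ^ b / b ≤ 1/b := by
      rw [div_le_div_iff_of_pos_right hb0]
      exact Real.rpow_le_one (by linarith) (by linarith) (by linarith)
    have hfin : (1/b : ℝ) ^ (p-1) * (1/b) = b ^ (-p) := by
      have hbp : (b:ℝ) ^ p ≠ 0 := by positivity
      rw [one_div, Real.inv_rpow hb0.le, Real.rpow_sub hb0 p 1, Real.rpow_one,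
        Real.rpow_neg hb0.le]
      field_simp
    calc (∫ x in (1/b)..(1:ℝ), x ^ (p-1) * (1-x) ^ (b-1))
        ≤ (1/b) ^ (p-1) * ((1 - 1/b) ^ b / b) := hval2 ▸ hle
      _ ≤ (1/b) ^ (p-1) * (1/b) :=
          mul_le_mul_of_nonneg_left hbd (Real.rpow_nonneg h0b.le _)
      _ = b ^ (-p) := hfin
  calc betaI p b = _ := hsplit
    _ ≤ (1/p) * b ^ (-p) + b ^ (-p) := add_le_add hpiece1 hpiece2
    _ = (1/p + 1) * b ^ (-p) := by ring


lemma rpow_le_add_of_mem {t₁ t₂ t r : ℝ} (h1 : 0 < t₁) (h2 : t₁ ≤ t) (h3 : t ≤ t₂) :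
    t ^ r ≤ t₁ ^ r + t₂ ^ r := by
  have h0 : 0 < t := lt_of_lt_of_le h1 h2
  rcases le_or_gt 0 r with hr | hr
  · have := Real.rpow_le_rpow h0.le h3 hr
    have := Real.rpow_nonneg h1.le r
    linarith
  · have := Real.rpow_le_rpow_of_nonpos h1 h2 hr.le
    have := Real.rpow_nonneg (h0.trans_le h3).le r
    linarith

set_option linter.unusedVariables false

variable {κ : ℝ → ℝ} {p T M : ℝ}

/-- Integrability of the convolution integrand. -/
lemma conv_integrand_integrable (hp : 0 < p)
    (hκc : ContinuousOn κ (Set.Ioi 0))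
    (hκb : ∀ s ∈ Ioc (0:ℝ) T, |κ s| ≤ M * s ^ (p-1))
    {f : ℝ → ℝ} {C a : ℝ} (ha : 0 < a) (hC : 0 ≤ C) (hM : 0 ≤ M)
    (hfc : ContinuousOn f (Ioo 0 T))
    (hfb : ∀ s ∈ Ioc (0:ℝ) T, |f s| ≤ C * s ^ (a-1))
    {s : ℝ} (hs : s ∈ Ioc (0:ℝ) T) :
    IntervalIntegrable (fun τ => κ (s - τ) * f τ) volume 0 s := by
  obtain ⟨hs0, hsT⟩ := hs
  rw [intervalIntegrable_iff_integrableOn_Ioc_of_le hs0.le]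
  have hIoo : (volume.restrict (Ioc (0:ℝ) s)) = volume.restrict (Ioo (0:ℝ) s) :=
    (Measure.restrict_congr_set Ioo_ae_eq_Ioc).symm
  have hbK : IntegrableOn (fun τ : ℝ => (M*C) * (τ ^ (a-1) * (s-τ) ^ (p-1))) (Ioc 0 s) := by
    have := (betaK_intervalIntegrable ha hp hs0).const_mul (M*C)
    rwa [intervalIntegrable_iff_integrableOn_Ioc_of_le hs0.le] at this
  have hcont : ContinuousOn (fun τ => κ (s - τ) * f τ) (Ioo 0 s) := by
    apply ContinuousOn.mul
    · refine hκc.comp (by fun_prop) (fun τ hτ => ?_)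
      exact mem_Ioi.2 (by linarith [hτ.2] : (0:ℝ) < s - τ)
    · exact hfc.mono (fun τ hτ => ⟨hτ.1, lt_of_lt_of_le hτ.2 hsT⟩)
  refine Integrable.mono' hbK ?_ ?_
  · unfold IntegrableOn at *
    rw [hIoo]
    exact hcont.aestronglyMeasurable measurableSet_Ioo
  · rw [hIoo]
    refine (ae_restrict_iff' measurableSet_Ioo).2 (Eventually.of_forall fun τ hτ => ?_)
    have h1 : s - τ ∈ Ioc (0:ℝ) T := ⟨by linarith [hτ.2], by linarith [hτ.1]⟩
    have h2 : τ ∈ Ioc (0:ℝ) T := ⟨hτ.1, le_trans hτ.2.le hsT⟩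
    calc ‖κ (s - τ) * f τ‖ = |κ (s-τ)| * |f τ| := abs_mul _ _
      _ ≤ (M * (s-τ) ^ (p-1)) * (C * τ ^ (a-1)) := by
          exact mul_le_mul (hκb _ h1) (hfb _ h2) (abs_nonneg _)
            (mul_nonneg hM (Real.rpow_nonneg (by linarith [h1.1]) _))
      _ = (M*C) * (τ ^ (a-1) * (s-τ) ^ (p-1)) := by ring

/-- Bound for the convolution. -/
lemma conv_bound (hp : 0 < p)
    (hκb : ∀ s ∈ Ioc (0:ℝ) T, |κ s| ≤ M * s ^ (p-1))
    {f : ℝ → ℝ} {C a : ℝ} (ha : 0 < a) (hC : 0 ≤ C) (hM : 0 ≤ M)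
    (hfc : ContinuousOn f (Ioo 0 T))
    (hfb : ∀ s ∈ Ioc (0:ℝ) T, |f s| ≤ C * s ^ (a-1))
    {s : ℝ} (hs : s ∈ Ioc (0:ℝ) T) :
    |lconv κ f s| ≤ (M * C * betaI a p) * s ^ (a + p - 1) := by
  obtain ⟨hs0, hsT⟩ := hs
  have hbK : IntervalIntegrable (fun τ : ℝ => (M*C) * (τ ^ (a-1) * (s-τ) ^ (p-1))) volume 0 s :=
    (betaK_intervalIntegrable ha hp hs0).const_mul (M*C)
  have hIoo : (volume.restrict (Set.uIoc (0:ℝ) s)) = volume.restrict (Ioo (0:ℝ) s) := by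
    rw [uIoc_of_le hs0.le]
    exact (Measure.restrict_congr_set Ioo_ae_eq_Ioc).symm
  have hb : ∀ᵐ τ ∂(volume.restrict (Set.uIoc (0:ℝ) s)),
      ‖κ (s - τ) * f τ‖ ≤ (M*C) * (τ ^ (a-1) * (s-τ) ^ (p-1)) := by
    rw [hIoo]
    refine (ae_restrict_iff' measurableSet_Ioo).2 (Eventually.of_forall fun τ hτ => ?_)
    have h1 : s - τ ∈ Ioc (0:ℝ) T := ⟨by linarith [hτ.2], by linarith [hτ.1]⟩
    have h2 : τ ∈ Ioc (0:ℝ) T := ⟨hτ.1, le_trans hτ.2.le hsT⟩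
    calc ‖κ (s - τ) * f τ‖ = |κ (s-τ)| * |f τ| := abs_mul _ _
      _ ≤ (M * (s-τ) ^ (p-1)) * (C * τ ^ (a-1)) := by
          exact mul_le_mul (hκb _ h1) (hfb _ h2) (abs_nonneg _)
            (mul_nonneg hM (Real.rpow_nonneg (by linarith [h1.1]) _))
      _ = (M*C) * (τ ^ (a-1) * (s-τ) ^ (p-1)) := by ring
  have hval : (∫ τ in (0:ℝ)..s, (M*C) * (τ ^ (a-1) * (s-τ) ^ (p-1)))
      = (M * C * betaI a p) * s ^ (a + p - 1) := by
    rw [intervalIntegral.integral_const_mul, betaI_scaled ha hp hs0]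
    ring
  have hnn : 0 ≤ (M * C * betaI a p) * s ^ (a + p - 1) := by
    have h1 := betaI_nonneg (a := a) (b := p)
    have h2 := Real.rpow_nonneg hs0.le (a + p - 1)
    exact mul_nonneg (mul_nonneg (mul_nonneg hM hC) h1) h2
  calc |lconv κ f s| = ‖∫ τ in (0:ℝ)..s, κ (s - τ) * f τ‖ := rfl
    _ ≤ |∫ τ in (0:ℝ)..s, (M*C) * (τ ^ (a-1) * (s-τ) ^ (p-1))| :=
        intervalIntegral.norm_integral_le_abs_of_norm_le hb hbK
    _ = _ := by rw [hval, abs_of_nonneg hnn]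


lemma conv_continuousOn (hp : 0 < p) (hT : 0 < T) (hM : 0 ≤ M)
    (hκc : ContinuousOn κ (Set.Ioi 0))
    (hκb : ∀ s ∈ Ioc (0:ℝ) T, |κ s| ≤ M * s ^ (p-1))
    {f : ℝ → ℝ} {C a : ℝ} (ha : 0 < a) (hC : 0 ≤ C)
    (hfc : ContinuousOn f (Ioo 0 T))
    (hfb : ∀ s ∈ Ioc (0:ℝ) T, |f s| ≤ C * s ^ (a-1)) :
    ContinuousOn (lconv κ f) (Ioo 0 T) := by
  intro t₀ ht₀
  refine ContinuousAt.continuousWithinAt ?_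
  obtain ⟨ht₀0, ht₀T⟩ := ht₀
  set t₁ := t₀/2 with ht₁def
  set t₂ := (t₀ + T)/2 with ht₂def
  have ht₁0 : 0 < t₁ := by rw [ht₁def]; linarith
  have ht₁t₀ : t₁ < t₀ := by rw [ht₁def]; linarith
  have ht₀t₂ : t₀ < t₂ := by rw [ht₂def]; linarith
  have ht₂T : t₂ < T := by rw [ht₂def]; linarith
  have key : ∀ t : ℝ, 0 < t →
      lconv κ f t = t * ∫ x in (0:ℝ)..1, κ (t - t*x) * f (t*x) := by
    intro t ht
    have := intervalIntegral.integral_comp_mul_left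
      (f := fun τ => κ (t - τ) * f τ) (a := (0:ℝ)) (b := 1) (c := t) ht.ne'
    rw [this]
    simp only [mul_zero, mul_one, smul_eq_mul, lconv]
    field_simp
  have hIcont : ContinuousAt (fun t => ∫ x in Ioc (0:ℝ) 1, κ (t - t*x) * f (t*x)) t₀ := by
    have hIoo : (volume.restrict (Ioc (0:ℝ) 1)) = volume.restrict (Ioo (0:ℝ) 1) :=
      (Measure.restrict_congr_set Ioo_ae_eq_Ioc).symm
    set B : ℝ := (M * C * (t₁ ^ (p-1) + t₂ ^ (p-1)) * (t₁ ^ (a-1) + t₂ ^ (a-1))) with hBdef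
    refine continuousAt_of_dominated (bound := fun x => B * (x ^ (a-1) * (1-x) ^ (p-1)))
      ?_ ?_ ?_ ?_
    · filter_upwards [Ioo_mem_nhds ht₁t₀ ht₀t₂] with t ht
      have htpos : 0 < t := lt_trans ht₁0 ht.1
      have htT : t < T := lt_trans ht.2 ht₂T
      rw [hIoo]
      refine ContinuousOn.aestronglyMeasurable ?_ measurableSet_Ioo
      apply ContinuousOn.mul
      · refine hκc.comp (by fun_prop) (fun x hx => ?_)
        have : 0 < t - t*x := by nlinarith [hx.1, hx.2]
        exact this
      · refine hfc.comp (by fun_prop) (fun x hx => ?_)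
        constructor
        · nlinarith [hx.1, hx.2]
        · nlinarith [hx.1, hx.2]
    · filter_upwards [Ioo_mem_nhds ht₁t₀ ht₀t₂] with t ht
      rw [hIoo]
      refine (ae_restrict_iff' measurableSet_Ioo).2 (Eventually.of_forall fun x hx => ?_)
      obtain ⟨hx0, hx1⟩ := hx
      have htpos : 0 < t := lt_trans ht₁0 ht.1
      have htT : t < T := lt_trans ht.2 ht₂T
      have h1m : 0 < 1 - x := by linarith
      have harg1 : t - t*x = t * (1-x) := by ring
      have harg1' : t - t*x ∈ Ioc (0:ℝ) T := ⟨by nlinarith, by nlinarith⟩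
      have harg2 : t*x ∈ Ioc (0:ℝ) T := ⟨by positivity, by nlinarith⟩
      have hb1 : |κ (t - t*x)| ≤ M * (t * (1-x)) ^ (p-1) := by
        rw [← harg1]; exact hκb _ harg1'
      have hb2 : |f (t*x)| ≤ C * (t*x) ^ (a-1) := hfb _ harg2
      have e1 : (t * (1-x)) ^ (p-1) = t ^ (p-1) * (1-x) ^ (p-1) :=
        Real.mul_rpow htpos.le h1m.le
      have e2 : (t*x) ^ (a-1) = t ^ (a-1) * x ^ (a-1) :=
        Real.mul_rpow htpos.le hx0.le
      have htp : t ^ (p-1) ≤ t₁ ^ (p-1) + t₂ ^ (p-1) :=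
        rpow_le_add_of_mem ht₁0 ht.1.le ht.2.le
      have hta : t ^ (a-1) ≤ t₁ ^ (a-1) + t₂ ^ (a-1) :=
        rpow_le_add_of_mem ht₁0 ht.1.le ht.2.le
      calc ‖κ (t - t*x) * f (t*x)‖ = |κ (t - t*x)| * |f (t*x)| := abs_mul _ _
        _ ≤ (M * (t * (1-x)) ^ (p-1)) * (C * (t*x) ^ (a-1)) := by
            exact mul_le_mul hb1 hb2 (abs_nonneg _)
              (mul_nonneg hM (Real.rpow_nonneg (by nlinarith) _))
        _ = (M * C) * (t ^ (p-1) * t ^ (a-1)) * (x ^ (a-1) * (1-x) ^ (p-1)) := by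
            rw [e1, e2]; ring
        _ ≤ B * (x ^ (a-1) * (1-x) ^ (p-1)) := by
            rw [hBdef]
            have hnn : 0 ≤ x ^ (a-1) * (1-x) ^ (p-1) :=
              mul_nonneg (Real.rpow_nonneg hx0.le _) (Real.rpow_nonneg h1m.le _)
            have h2 : t ^ (p-1) * t ^ (a-1) ≤ (t₁ ^ (p-1) + t₂ ^ (p-1)) * (t₁ ^ (a-1) + t₂ ^ (a-1)) := by
              have h4 := Real.rpow_nonneg htpos.le (a-1)
              have h3 : (0:ℝ) ≤ t₁ ^ (p-1) + t₂ ^ (p-1) := by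
                have := Real.rpow_nonneg ht₁0.le (p-1)
                have := Real.rpow_nonneg (lt_trans ht₁0 (lt_trans ht₁t₀ ht₀t₂)).le (p-1)
                linarith
              exact mul_le_mul htp hta h4 h3
            calc (M * C) * (t ^ (p-1) * t ^ (a-1)) * (x ^ (a-1) * (1-x) ^ (p-1))
                ≤ (M * C) * ((t₁ ^ (p-1) + t₂ ^ (p-1)) * (t₁ ^ (a-1) + t₂ ^ (a-1)))
                    * (x ^ (a-1) * (1-x) ^ (p-1)) :=
                  mul_le_mul_of_nonneg_right
                    (mul_le_mul_of_nonneg_left h2 (mul_nonneg hM hC)) hnn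
              _ = (M * C * (t₁ ^ (p-1) + t₂ ^ (p-1)) * (t₁ ^ (a-1) + t₂ ^ (a-1)))
                    * (x ^ (a-1) * (1-x) ^ (p-1)) := by ring
    · exact (betaI_integrableOn ha hp).const_mul B
    · rw [hIoo]
      refine (ae_restrict_iff' measurableSet_Ioo).2 (Eventually.of_forall fun x hx => ?_)
      obtain ⟨hx0, hx1⟩ := hx
      have hκa : ContinuousAt κ (t₀ - t₀*x) :=
        hκc.continuousAt (Ioi_mem_nhds (by nlinarith))
      have hfa : ContinuousAt f (t₀*x) :=
        hfc.continuousAt ((isOpen_Ioo).mem_nhds ⟨by positivity, by nlinarith⟩)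
      exact ContinuousAt.mul
        (ContinuousAt.comp (f := fun t : ℝ => t - t*x) hκa (by fun_prop))
        (ContinuousAt.comp (f := fun t : ℝ => t*x) hfa (by fun_prop))
  have heq : (fun t => t * ∫ x in Ioc (0:ℝ) 1, κ (t - t*x) * f (t*x)) =ᶠ[nhds t₀] lconv κ f := by
    filter_upwards [Ioo_mem_nhds ht₀0 ht₀T] with t ht
    rw [key t ht.1, intervalIntegral.integral_of_le (by norm_num : (0:ℝ) ≤ 1)]
  exact ContinuousAt.congr (continuousAt_id.mul hIcont) heq

lemma betaI_symm (a b : ℝ) : betaI a b = betaI b a := by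
  rw [betaI, betaI]
  have := intervalIntegral.integral_comp_sub_left (a := (0:ℝ)) (b := 1)
    (fun x : ℝ => x ^ (b-1) * (1-x) ^ (a-1)) 1
  simp only [sub_self, sub_zero] at this
  rw [← this]
  refine intervalIntegral.integral_congr (fun x hx => ?_)
  simp only [sub_sub_cancel]
  ring

noncomputable def Kco (M p : ℝ) : ℕ → ℝ
  | 0 => M
  | n + 1 => M * Kco M p n * betaI (((n:ℝ)+1)*p) p

lemma Kco_nonneg {M : ℝ} (p : ℝ) (hM : 0 ≤ M) : ∀ n, 0 ≤ Kco M p n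
  | 0 => hM
  | n + 1 => mul_nonneg (mul_nonneg hM (Kco_nonneg p hM n)) betaI_nonneg

lemma convNPow_prop {κ : ℝ → ℝ} {p T M : ℝ} (hp : 0 < p) (hT : 0 < T) (hM : 0 ≤ M)
    (hκc : ContinuousOn κ (Set.Ioi 0))
    (hκb : ∀ s ∈ Ioc (0:ℝ) T, |κ s| ≤ M * s ^ (p-1)) :
    ∀ n, ContinuousOn (convNPow κ n) (Ioo 0 T) ∧
      ∀ s ∈ Ioc (0:ℝ) T, |convNPow κ n s| ≤ Kco M p n * s ^ (((n:ℝ)+1)*p - 1) := by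
  intro n
  induction n with
  | zero =>
    constructor
    · exact hκc.mono (fun x hx => hx.1)
    · intro s hs
      have : ((0:ℕ):ℝ) + 1 = 1 := by norm_num
      rw [this, one_mul]
      exact hκb s hs
  | succ n ih =>
    obtain ⟨ihc, ihb⟩ := ih
    have ha : (0:ℝ) < ((n:ℝ)+1)*p := by positivity
    have hfb : ∀ s ∈ Ioc (0:ℝ) T, |convNPow κ n s| ≤ Kco M p n * s ^ ((((n:ℝ)+1)*p) - 1) := ihb
    constructor
    · exact conv_continuousOn hp hT hM hκc hκb ha (Kco_nonneg p hM n) ihc hfb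
    · intro s hs
      have hb := conv_bound hp hκb ha (Kco_nonneg p hM n) hM ihc hfb hs
      have e : (((n:ℝ)+1)*p) + p - 1 = (((n+1:ℕ):ℝ)+1)*p - 1 := by push_cast; ring
      rw [e] at hb
      exact hb

lemma betaI_tendsto_zero {p M : ℝ} (hp : 0 < p) (hp1 : p < 1) (hM : 0 ≤ M) :
    Filter.Tendsto (fun n : ℕ => M * betaI (((n:ℝ)+1)*p) p) atTop (nhds 0) := by
  have h1 : Filter.Tendsto (fun n : ℕ => ((n:ℝ)+1)*p) atTop atTop := by
    apply Filter.Tendsto.atTop_mul_const hp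
    exact tendsto_atTop_add_const_right _ 1 tendsto_natCast_atTop_atTop
  have h2 : Filter.Tendsto (fun x : ℝ => M * ((1/p+1) * x ^ (-p))) atTop (nhds 0) := by
    have := (tendsto_rpow_neg_atTop hp).const_mul (M * (1/p+1))
    simpa [mul_assoc, mul_comm, mul_left_comm] using this
  have h3 : Filter.Tendsto (fun n : ℕ => M * ((1/p+1) * (((n:ℝ)+1)*p) ^ (-p)))
      atTop (nhds 0) := h2.comp h1
  have h4 : ∀ᶠ n : ℕ in atTop, 1 ≤ ((n:ℝ)+1)*p := by
    have := h1.eventually_ge_atTop 1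
    exact this
  rw [show (0:ℝ) = 0 from rfl]
  apply squeeze_zero' (g := fun n : ℕ => M * ((1/p+1) * (((n:ℝ)+1)*p) ^ (-p)))
  · exact Eventually.of_forall (fun n => mul_nonneg hM betaI_nonneg)
  · filter_upwards [h4] with n hn
    have hB : betaI (((n:ℝ)+1)*p) p ≤ (1/p+1) * (((n:ℝ)+1)*p) ^ (-p) := by
      rw [betaI_symm]
      exact betaI_le hp hp1 hn
    exact mul_le_mul_of_nonneg_left hB hM
  · exact h3

lemma summable_Kco_mul_geom {p M : ℝ} (hp : 0 < p) (hp1 : p < 1) (hM : 0 ≤ M)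
    {c : ℝ} (hc : 0 < c) :
    Summable (fun n : ℕ => Kco M p n * c ^ n) := by
  set R : ℝ := 1/(4*c+1) with hR
  have hR0 : 0 < R := by rw [hR]; positivity
  set v : ℕ → ℝ := fun n => (Kco M p n + R ^ n) * c ^ n with hv
  have hvpos : ∀ n, 0 < v n := fun n =>
    mul_pos (add_pos_of_nonneg_of_pos (Kco_nonneg p hM n) (pow_pos hR0 n)) (pow_pos hc n)
  have hsumv : Summable v := by
    apply summable_of_ratio_norm_eventually_le (r := 1/2) (by norm_num)
    have hev := (betaI_tendsto_zero hp hp1 hM).eventually_le_const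
      (show (0:ℝ) < 1/(4*c+1) by positivity)
    filter_upwards [hev] with n hn
    have hKn := Kco_nonneg p hM n
    have hstep : Kco M p (n+1) ≤ (M * betaI (((n:ℝ)+1)*p) p) * Kco M p n := by
      show M * Kco M p n * betaI (((n:ℝ)+1)*p) p ≤ _
      ring_nf
      exact le_refl _
    have hRn := pow_pos hR0 n
    rw [Real.norm_eq_abs, Real.norm_eq_abs, abs_of_pos (hvpos _), abs_of_pos (hvpos _)]
    have hfac : Kco M p (n+1) + R ^ (n+1) ≤ (R + R) * (Kco M p n + R ^ n) := by
      have h1 : Kco M p (n+1) ≤ R * Kco M p n :=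
        le_trans hstep (mul_le_mul_of_nonneg_right hn hKn)
      have h2 : R ^ (n+1) = R * R ^ n := by ring
      nlinarith [mul_nonneg hR0.le hKn, mul_nonneg hR0.le hRn.le]
    calc v (n+1) = (Kco M p (n+1) + R ^ (n+1)) * (c ^ n * c) := by rw [hv]; ring
      _ ≤ ((R + R) * (Kco M p n + R ^ n)) * (c ^ n * c) := by
          apply mul_le_mul_of_nonneg_right hfac
          positivity
      _ = ((2*R)*c) * v n := by rw [hv]; ring
      _ ≤ (1/2) * v n := by
          apply mul_le_mul_of_nonneg_right _ (hvpos n).le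
          rw [hR]
          have h4c : (0:ℝ) < 4*c+1 := by positivity
          rw [show (2:ℝ) * (1/(4*c+1)) * c = (2*c)/(4*c+1) by ring,
            div_le_div_iff₀ h4c (by norm_num : (0:ℝ) < 2)]
          nlinarith
  refine Summable.of_nonneg_of_le (fun n => ?_) (fun n => ?_) hsumv
  · exact mul_nonneg (Kco_nonneg p hM n) (by positivity)
  · show Kco M p n * c ^ n ≤ (Kco M p n + R ^ n) * c ^ n
    have := pow_pos hR0 n
    have := pow_pos hc n
    nlinarith [Kco_nonneg p hM n]

lemma summable_main {p M : ℝ} (hp : 0 < p) (hp1 : p < 1) (hM : 0 ≤ M)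
    {b : ℕ → ℝ} {r : ℝ} (hr : 0 < r) (hb : Summable fun j => |b j| * r ^ j)
    (m : ℕ) {c : ℝ} (hc : 0 < c) {w : ℕ → ℝ} {A : ℝ}
    (hw0 : ∀ n, 0 ≤ w n) (hw : ∀ n, w n ≤ A * c ^ n) :
    Summable (fun n : ℕ => |b (n+m)| * Kco M p n * w n) := by
  obtain ⟨Cb, hCb⟩ := hb.tendsto_atTop_zero.bddAbove_range.imp
    (fun Cb h => fun j => h (Set.mem_range_self j))
  have hCb' : ∀ j, |b j| * r ^ j ≤ Cb := hCb
  have hA : 0 ≤ A := by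
    have := (hw0 0).trans (hw 0)
    nlinarith [pow_pos hc 0]
  have key : Summable (fun n : ℕ => (Cb * A / r ^ m) * (Kco M p n * (c/r) ^ n)) :=
    ((summable_Kco_mul_geom hp hp1 hM (by positivity)).mul_left _)
  have hCb0 : 0 ≤ Cb := le_trans (by positivity) (hCb' 0)
  refine Summable.of_nonneg_of_le (fun n => ?_) (fun n => ?_) key
  · exact mul_nonneg (mul_nonneg (abs_nonneg _) (Kco_nonneg p hM n)) (hw0 n)
  · have h1 : |b (n+m)| ≤ Cb / r ^ (n+m) := by
      rw [le_div_iff₀ (pow_pos hr _)]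
      exact hCb' _
    have hKnn := Kco_nonneg p hM n
    calc |b (n+m)| * Kco M p n * w n
        ≤ (Cb / r ^ (n+m)) * Kco M p n * (A * c ^ n) := by
          apply mul_le_mul _ (hw n) (hw0 n)
          · positivity
          · exact mul_le_mul_of_nonneg_right h1 hKnn
      _ = (Cb * A / r ^ m) * (Kco M p n * (c/r) ^ n) := by
          rw [pow_add, div_pow]
          field_simp

lemma lconv_comm (f g : ℝ → ℝ) : lconv f g = lconv g f := by
  funext t
  show (∫ τ in (0:ℝ)..t, f (t - τ) * g τ) = ∫ τ in (0:ℝ)..t, g (t - τ) * f τ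
  have h := intervalIntegral.integral_comp_sub_left (a := (0:ℝ)) (b := t)
    (fun τ => f (t - τ) * g τ) t
  simp only [sub_self, sub_zero] at h
  rw [← h]
  refine intervalIntegral.integral_congr (fun x hx => ?_)
  simp only [sub_sub_cancel]
  ring

open scoped Classical in
lemma exists_measurable_version {f : ℝ → ℝ} {T : ℝ} (hf : ContinuousOn f (Ioo 0 T)) :
    ∃ g : ℝ → ℝ, Measurable g ∧ EqOn f g (Ioo 0 T) ∧ ∀ x, x ∉ Ioo (0:ℝ) T → g x = 0 := by
  refine ⟨(Ioo 0 T).piecewise f 0,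
    hf.measurable_piecewise continuousOn_const measurableSet_Ioo, fun x hx => ?_, fun x hx => ?_⟩
  · exact (Set.piecewise_eq_of_mem _ _ _ hx).symm
  · exact Set.piecewise_eq_of_notMem _ _ _ hx

lemma step_inner {κ f κm fm : ℝ → ℝ} {T : ℝ}
    (hκeq : EqOn κ κm (Ioo 0 T)) (hfeq : EqOn f fm (Ioo 0 T))
    {τ : ℝ} (hτ0 : 0 < τ) (hτT : τ < T) :
    lconv κ f τ = ∫ σ in Ioc (0:ℝ) τ, κm (τ-σ) * fm σ := by
  show (∫ σ in (0:ℝ)..τ, κ (τ - σ) * f σ) = _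
  rw [intervalIntegral.integral_of_le hτ0.le]
  have hae : ∀ᵐ σ ∂(volume.restrict (Ioc (0:ℝ) τ)), σ ∈ Ioo (0:ℝ) τ := by
    rw [(Measure.restrict_congr_set Ioo_ae_eq_Ioc).symm]
    exact (ae_restrict_iff' measurableSet_Ioo).2 (Eventually.of_forall fun σ hσ => hσ)
  refine integral_congr_ae ?_
  filter_upwards [hae] with σ hσ
  rw [hκeq ⟨by linarith [hσ.2], by linarith [hσ.1]⟩, hfeq ⟨hσ.1, by linarith [hσ.2]⟩]

lemma conv_abs_bound {κm fm : ℝ → ℝ} {p a M C T : ℝ} (hp : 0 < p) (ha : 0 < a)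
    (hM : 0 ≤ M) (hC : 0 ≤ C)
    (hκmb : ∀ u ∈ Ioo (0:ℝ) T, |κm u| ≤ M * u ^ (p-1))
    (hfmb : ∀ u ∈ Ioo (0:ℝ) T, |fm u| ≤ C * u ^ (a-1))
    {τ : ℝ} (hτ0 : 0 < τ) (hτT : τ < T) :
    (∫ σ in Ioc (0:ℝ) τ, ‖κm (τ-σ) * fm σ‖) ≤ (M*C*betaI a p) * τ ^ (a+p-1) := by
  have hbK : IntegrableOn (fun σ : ℝ => (M*C) * (σ ^ (a-1) * (τ-σ) ^ (p-1))) (Ioc 0 τ) := by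
    have := (betaK_intervalIntegrable ha hp hτ0).const_mul (M*C)
    rwa [intervalIntegrable_iff_integrableOn_Ioc_of_le hτ0.le] at this
  have hae : ∀ᵐ σ ∂(volume.restrict (Ioc (0:ℝ) τ)), σ ∈ Ioo (0:ℝ) τ := by
    rw [(Measure.restrict_congr_set Ioo_ae_eq_Ioc).symm]
    exact (ae_restrict_iff' measurableSet_Ioo).2 (Eventually.of_forall fun σ hσ => hσ)
  have hub : ∀ᵐ σ ∂(volume.restrict (Ioc (0:ℝ) τ)),
      ‖κm (τ-σ) * fm σ‖ ≤ (M*C) * (σ ^ (a-1) * (τ-σ) ^ (p-1)) := by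
    filter_upwards [hae] with σ hσ
    have h1 : τ - σ ∈ Ioo (0:ℝ) T := ⟨by linarith [hσ.2], by linarith [hσ.1]⟩
    have h2 : σ ∈ Ioo (0:ℝ) T := ⟨hσ.1, by linarith [hσ.2]⟩
    calc ‖κm (τ-σ) * fm σ‖ = |κm (τ-σ)| * |fm σ| := abs_mul _ _
      _ ≤ (M * (τ-σ) ^ (p-1)) * (C * σ ^ (a-1)) :=
          mul_le_mul (hκmb _ h1) (hfmb _ h2) (abs_nonneg _)
            (mul_nonneg hM (Real.rpow_nonneg (by linarith [h1.1]) _))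
      _ = (M*C) * (σ ^ (a-1) * (τ-σ) ^ (p-1)) := by ring
  have hval : (∫ σ in Ioc (0:ℝ) τ, (M*C) * (σ ^ (a-1) * (τ-σ) ^ (p-1)))
      = (M * C * betaI a p) * τ ^ (a + p - 1) := by
    rw [← intervalIntegral.integral_of_le hτ0.le, intervalIntegral.integral_const_mul,
      betaI_scaled ha hp hτ0]
    ring
  calc (∫ σ in Ioc (0:ℝ) τ, ‖κm (τ-σ) * fm σ‖)
      ≤ ∫ σ in Ioc (0:ℝ) τ, (M*C) * (σ ^ (a-1) * (τ-σ) ^ (p-1)) :=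
        integral_mono_of_nonneg (Eventually.of_forall fun σ => norm_nonneg _) hbK hub
    _ = _ := hval

lemma lconv_assoc_sonine {κ k f : ℝ → ℝ} {p q a T M N C : ℝ}
    (hp : 0 < p) (hq : 0 < q) (ha : 0 < a) (hT : 0 < T)
    (hM : 0 ≤ M) (hN : 0 ≤ N) (hC : 0 ≤ C)
    (hκc : ContinuousOn κ (Set.Ioi 0)) (hκb : ∀ u ∈ Ioc (0:ℝ) T, |κ u| ≤ M * u ^ (p-1))
    (hkc : ContinuousOn k (Set.Ioi 0)) (hkb : ∀ u ∈ Ioc (0:ℝ) T, |k u| ≤ N * u ^ (q-1))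
    (hfc : ContinuousOn f (Ioo 0 T)) (hfb : ∀ u ∈ Ioc (0:ℝ) T, |f u| ≤ C * u ^ (a-1))
    (hson : ∀ u : ℝ, 0 < u → lconv k κ u = 1)
    {s : ℝ} (hs : s ∈ Ioo (0:ℝ) T) :
    lconv k (lconv κ f) s = ∫ σ in (0:ℝ)..s, f σ := by
  obtain ⟨hs0, hsT⟩ := hs
  obtain ⟨κm, hκm, hκeq, hκ0⟩ := exists_measurable_version (hκc.mono Ioo_subset_Ioi_self)
  obtain ⟨km, hkm, hkeq, hk0⟩ := exists_measurable_version (hkc.mono Ioo_subset_Ioi_self)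
  obtain ⟨fm, hfm, hfeq, hf0⟩ := exists_measurable_version hfc
  have hκmb : ∀ u ∈ Ioo (0:ℝ) T, |κm u| ≤ M * u ^ (p-1) := fun u hu => by
    rw [← hκeq hu]; exact hκb u ⟨hu.1, hu.2.le⟩
  have hkmb : ∀ u ∈ Ioo (0:ℝ) T, |km u| ≤ N * u ^ (q-1) := fun u hu => by
    rw [← hkeq hu]; exact hkb u ⟨hu.1, hu.2.le⟩
  have hfmb : ∀ u ∈ Ioo (0:ℝ) T, |fm u| ≤ C * u ^ (a-1) := fun u hu => by
    rw [← hfeq hu]; exact hfb u ⟨hu.1, hu.2.le⟩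
  set μ := volume.restrict (Ioc (0:ℝ) s) with hμ
  set W : ℝ × ℝ → ℝ :=
    fun z => if z.2 < z.1 then km (s - z.1) * (κm (z.1 - z.2) * fm z.2) else 0 with hW
  have hWm : Measurable W := by
    refine Measurable.ite (measurableSet_lt measurable_snd measurable_fst) ?_ measurable_const
    exact (hkm.comp (measurable_const.sub measurable_fst)).mul
      ((hκm.comp (measurable_fst.sub measurable_snd)).mul (hfm.comp measurable_snd))
  have hae : ∀ᵐ τ ∂μ, τ ∈ Ioo (0:ℝ) s := by
    rw [hμ, (Measure.restrict_congr_set Ioo_ae_eq_Ioc).symm]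
    exact (ae_restrict_iff' measurableSet_Ioo).2 (Eventually.of_forall fun σ hσ => hσ)
  -- inner reduction
  have hres : ∀ τ ∈ Ioo (0:ℝ) s, Iio τ ∩ Ioc (0:ℝ) s = Ioo (0:ℝ) τ := by
    intro τ hτ
    ext x
    constructor
    · rintro ⟨h1, h2, h3⟩; exact ⟨h2, h1⟩
    · rintro ⟨h1, h2⟩; exact ⟨h2, h1, by linarith [hτ.2]⟩
  have hindic : ∀ τ σ : ℝ, W (τ, σ) =
      km (s-τ) * ((Iio τ).indicator (fun σ => κm (τ-σ) * fm σ) σ) := by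
    intro τ σ
    by_cases h : σ < τ
    · rw [hW]; simp [h, Set.indicator_of_mem (mem_Iio.2 h)]
    · rw [hW]; simp [h, Set.indicator_of_notMem (fun hh => h (mem_Iio.1 hh))]
  have hinner : ∀ τ ∈ Ioo (0:ℝ) s,
      (∫ σ, W (τ, σ) ∂μ) = km (s-τ) * ∫ σ in Ioc (0:ℝ) τ, κm (τ-σ) * fm σ := by
    intro τ hτ
    simp_rw [hindic τ]
    rw [MeasureTheory.integral_const_mul, MeasureTheory.integral_indicator measurableSet_Iio]
    rw [hμ, Measure.restrict_restrict measurableSet_Iio, hres τ hτ,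
      Measure.restrict_congr_set Ioo_ae_eq_Ioc]
  -- LHS as double integral
  have hLHS : lconv k (lconv κ f) s = ∫ τ, (∫ σ, W (τ, σ) ∂μ) ∂μ := by
    show (∫ τ in (0:ℝ)..s, k (s - τ) * lconv κ f τ) = _
    rw [intervalIntegral.integral_of_le hs0.le, ← hμ]
    refine integral_congr_ae ?_
    filter_upwards [hae] with τ hτ
    rw [hinner τ hτ, ← step_inner hκeq hfeq hτ.1 (lt_trans hτ.2 hsT),
      hkeq ⟨by linarith [hτ.2], by linarith [hτ.1]⟩]
  -- integrability on the product
  have hInt : Integrable W (μ.prod μ) := by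
    rw [integrable_prod_iff hWm.aestronglyMeasurable]
    constructor
    · filter_upwards [hae] with τ hτ
      have hIoo : IntegrableOn (fun σ => κm (τ-σ) * fm σ) (Ioo (0:ℝ) τ) volume := by
        have h0 := conv_integrand_integrable hp hκc hκb ha hC hM hfc hfb
          ⟨hτ.1, le_trans hτ.2.le hsT.le⟩
        rw [intervalIntegrable_iff_integrableOn_Ioc_of_le hτ.1.le] at h0
        refine (h0.mono_set Ioo_subset_Ioc_self).congr_fun (fun σ hσ => ?_) measurableSet_Ioo
        rw [← hκeq ⟨by linarith [hσ.2], by linarith [hσ.1, lt_trans hτ.2 hsT]⟩,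
          ← hfeq ⟨hσ.1, by linarith [hσ.2, lt_trans hτ.2 hsT]⟩]
      have : Integrable ((Iio τ).indicator (fun σ => κm (τ-σ) * fm σ)) μ := by
        rw [integrable_indicator_iff measurableSet_Iio, hμ, IntegrableOn,
          Measure.restrict_restrict measurableSet_Iio, hres τ hτ]
        exact hIoo
      have heqf : (fun σ => W (τ, σ)) =
          fun σ => km (s-τ) * ((Iio τ).indicator (fun σ => κm (τ-σ) * fm σ) σ) :=
        funext (hindic τ)
      rw [heqf]
      exact this.const_mul _
    · have hmeas : AEStronglyMeasurable (fun τ => ∫ σ, ‖W (τ, σ)‖ ∂μ) μ :=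
        (hWm.norm.stronglyMeasurable.integral_prod_right').aestronglyMeasurable
      set D := M * C * betaI a p with hD
      have hDnn : 0 ≤ D := mul_nonneg (mul_nonneg hM hC) betaI_nonneg
      have hbint : IntegrableOn
          (fun τ : ℝ => (N * D) * (τ ^ (a+p-1) * (s-τ) ^ (q-1))) (Ioc 0 s) volume := by
        have := (betaK_intervalIntegrable (by positivity : (0:ℝ) < a + p) hq hs0).const_mul (N*D)
        rw [intervalIntegrable_iff_integrableOn_Ioc_of_le hs0.le] at this
        refine this.congr_fun (fun τ hτ => ?_) measurableSet_Ioc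
        rw [show a + p - 1 = (a+p) - 1 by ring]
      refine Integrable.mono' hbint hmeas ?_
      filter_upwards [hae] with τ hτ
      have hτT : τ < T := lt_trans hτ.2 hsT
      have h1 : (∫ σ, ‖W (τ, σ)‖ ∂μ) =
          |km (s-τ)| * ∫ σ in Ioc (0:ℝ) τ, ‖κm (τ-σ) * fm σ‖ := by
        have : (fun σ => ‖W (τ, σ)‖) = fun σ =>
            |km (s-τ)| * ((Iio τ).indicator (fun σ => ‖κm (τ-σ) * fm σ‖) σ) := by
          funext σ
          rw [hindic τ σ]
          rw [norm_mul]
          congr 1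
          rw [norm_indicator_eq_indicator_norm]
        rw [this, MeasureTheory.integral_const_mul, MeasureTheory.integral_indicator measurableSet_Iio, hμ,
          Measure.restrict_restrict measurableSet_Iio, hres τ hτ,
          Measure.restrict_congr_set Ioo_ae_eq_Ioc]
      rw [Real.norm_eq_abs, abs_of_nonneg (by positivity :
        (0:ℝ) ≤ ∫ σ, ‖W (τ, σ)‖ ∂μ), h1]
      have h2 : (∫ σ in Ioc (0:ℝ) τ, ‖κm (τ-σ) * fm σ‖) ≤ D * τ ^ (a+p-1) :=
        conv_abs_bound hp ha hM hC hκmb hfmb hτ.1 hτT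
      have h3 : |km (s-τ)| ≤ N * (s-τ) ^ (q-1) :=
        hkmb _ ⟨by linarith [hτ.2], by linarith [hτ.1]⟩
      have h4 : (0:ℝ) ≤ ∫ σ in Ioc (0:ℝ) τ, ‖κm (τ-σ) * fm σ‖ := by positivity
      calc |km (s-τ)| * ∫ σ in Ioc (0:ℝ) τ, ‖κm (τ-σ) * fm σ‖
          ≤ (N * (s-τ) ^ (q-1)) * (D * τ ^ (a+p-1)) :=
            mul_le_mul h3 h2 h4
              (mul_nonneg hN (Real.rpow_nonneg (by linarith [hτ.2]) _))
        _ = (N * D) * (τ ^ (a+p-1) * (s-τ) ^ (q-1)) := by ring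
  -- swap
  have hswap : (∫ τ, (∫ σ, W (τ, σ) ∂μ) ∂μ) = ∫ σ, (∫ τ, W (τ, σ) ∂μ) ∂μ :=
    integral_integral_swap (f := fun τ σ => W (τ, σ)) hInt
  -- outer computation
  have houter : ∀ σ ∈ Ioo (0:ℝ) s, (∫ τ, W (τ, σ) ∂μ) = f σ := by
    intro σ hσ
    have hres2 : Ioi σ ∩ Ioc (0:ℝ) s = Ioc σ s := by
      ext x
      constructor
      · rintro ⟨h1, h2, h3⟩; exact ⟨h1, h3⟩
      · rintro ⟨h1, h2⟩; exact ⟨h1, lt_trans hσ.1 h1, h2⟩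
    have hindic2 : ∀ τ : ℝ, W (τ, σ) =
        ((Ioi σ).indicator (fun τ => km (s-τ) * κm (τ-σ)) τ) * fm σ := by
      intro τ
      by_cases h : σ < τ
      · rw [hW]; simp only [if_pos h, Set.indicator_of_mem (mem_Ioi.2 h)]; ring
      · rw [hW]; simp [if_neg h, Set.indicator_of_notMem (fun hh => h (mem_Ioi.1 hh))]
    have hval : (∫ τ, (Ioi σ).indicator (fun τ => km (s-τ) * κm (τ-σ)) τ ∂μ) = 1 := by
      rw [MeasureTheory.integral_indicator measurableSet_Ioi, hμ,
        Measure.restrict_restrict measurableSet_Ioi, hres2]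
      have e1 : (∫ τ in Ioc σ s, km (s-τ) * κm (τ-σ)) =
          ∫ u in (0:ℝ)..(s-σ), km ((s-σ) - u) * κm u := by
        rw [← intervalIntegral.integral_of_le hσ.2.le]
        have := intervalIntegral.integral_comp_add_right (a := (0:ℝ)) (b := s - σ)
          (fun τ => km (s-τ) * κm (τ-σ)) σ
        rw [zero_add, sub_add_cancel] at this
        rw [← this]
        refine intervalIntegral.integral_congr (fun u hu => ?_)
        congr 2 <;> ring
      have e2 : (∫ u in (0:ℝ)..(s-σ), km ((s-σ) - u) * κm u) = lconv k κ (s-σ) := by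
        have hsσ : 0 < s - σ := by linarith [hσ.2]
        show _ = ∫ u in (0:ℝ)..(s-σ), k ((s-σ) - u) * κ u
        rw [intervalIntegral.integral_of_le hsσ.le, intervalIntegral.integral_of_le hsσ.le]
        have hae2 : ∀ᵐ u ∂(volume.restrict (Ioc (0:ℝ) (s-σ))), u ∈ Ioo (0:ℝ) (s-σ) := by
          rw [(Measure.restrict_congr_set Ioo_ae_eq_Ioc).symm]
          exact (ae_restrict_iff' measurableSet_Ioo).2 (Eventually.of_forall fun u hu => hu)
        refine integral_congr_ae ?_
        filter_upwards [hae2] with u hu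
        rw [hkeq ⟨by linarith [hu.2], by linarith [hu.1, hσ.1]⟩,
          hκeq ⟨hu.1, by linarith [hu.2, hσ.1]⟩]
      rw [e1, e2, hson _ (by linarith [hσ.2])]
    calc (∫ τ, W (τ, σ) ∂μ)
        = ∫ τ, ((Ioi σ).indicator (fun τ => km (s-τ) * κm (τ-σ)) τ) * fm σ ∂μ := by
          refine integral_congr_ae (Eventually.of_forall (fun τ => hindic2 τ))
      _ = (∫ τ, (Ioi σ).indicator (fun τ => km (s-τ) * κm (τ-σ)) τ ∂μ) * fm σ :=
          integral_mul_const _ _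
      _ = f σ := by rw [hval, one_mul, ← hfeq ⟨hσ.1, by linarith [hσ.2]⟩]
  rw [hLHS, hswap, intervalIntegral.integral_of_le hs0.le]
  refine integral_congr_ae ?_
  filter_upwards [hae] with σ hσ
  exact houter σ hσ

lemma geom_split {x p : ℝ} (hx : 0 < x) (e : ℝ) (j : ℕ) :
    x ^ (e + p * (j:ℝ)) = x ^ e * (x ^ p) ^ j := by
  rw [← Real.rpow_natCast (x ^ p) j, ← Real.rpow_mul hx.le, ← Real.rpow_add hx]

lemma betaI_mono_left {a a' q : ℝ} (ha : 0 < a) (h : a ≤ a') (hq : 0 < q) :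
    betaI a' q ≤ betaI a q := by
  have ha' : 0 < a' := lt_of_lt_of_le ha h
  refine intervalIntegral.integral_mono_ae_restrict (by norm_num)
    ((intervalIntegrable_iff_integrableOn_Ioc_of_le (by norm_num)).2 (betaI_integrableOn ha' hq))
    ((intervalIntegrable_iff_integrableOn_Ioc_of_le (by norm_num)).2 (betaI_integrableOn ha hq)) ?_
  rw [show volume.restrict (Icc (0:ℝ) 1) = volume.restrict (Ioc (0:ℝ) 1) from
    (Measure.restrict_congr_set Ioc_ae_eq_Icc).symm]
  refine (ae_restrict_iff' measurableSet_Ioc).2 (Eventually.of_forall fun x hx => ?_)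
  have h1 : x ^ (a'-1) ≤ x ^ (a-1) :=
    Real.rpow_le_rpow_of_exponent_ge hx.1 hx.2 (by linarith)
  exact mul_le_mul_of_nonneg_right h1 (Real.rpow_nonneg (by linarith [hx.2]) _)

lemma sum_dom {p t₁ t₂ : ℝ} (h1 : 0 < t₁) (h12 : t₁ ≤ t₂) (j : ℕ) :
    ∀ u ∈ Icc t₁ t₂, u ^ ((((j:ℕ):ℝ)+1)*p - 1) ≤
      (t₁ ^ (p-1) + t₂ ^ (p-1)) * (max (t₁ ^ p) (t₂ ^ p)) ^ j := by
  intro u hu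
  have h2 : 0 < t₂ := lt_of_lt_of_le h1 h12
  have hcnn : 0 ≤ max (t₁ ^ p) (t₂ ^ p) :=
    le_trans (Real.rpow_nonneg h1.le p) (le_max_left _ _)
  have l := rpow_le_add_of_mem (r := ((j:ℝ)+1)*p - 1) h1 hu.1 hu.2
  have e : ((j:ℝ)+1)*p - 1 = (p - 1) + p * (j:ℝ) := by ring
  rw [e] at l ⊢
  have b1 : t₁ ^ ((p-1) + p*(j:ℝ)) ≤ t₁ ^ (p-1) * (max (t₁ ^ p) (t₂ ^ p)) ^ j := by
    rw [geom_split h1]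
    exact mul_le_mul_of_nonneg_left
      (pow_le_pow_left₀ (Real.rpow_nonneg h1.le p) (le_max_left _ _) j)
      (Real.rpow_nonneg h1.le _)
  have b2 : t₂ ^ ((p-1) + p*(j:ℝ)) ≤ t₂ ^ (p-1) * (max (t₁ ^ p) (t₂ ^ p)) ^ j := by
    rw [geom_split h2]
    exact mul_le_mul_of_nonneg_left
      (pow_le_pow_left₀ (Real.rpow_nonneg h2.le p) (le_max_right _ _) j)
      (Real.rpow_nonneg h2.le _)
  calc u ^ ((p-1) + p*(j:ℝ)) ≤ t₁ ^ ((p-1)+p*(j:ℝ)) + t₂ ^ ((p-1)+p*(j:ℝ)) := l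
    _ ≤ t₁ ^ (p-1) * (max (t₁ ^ p) (t₂ ^ p)) ^ j + t₂ ^ (p-1) * (max (t₁ ^ p) (t₂ ^ p)) ^ j :=
        add_le_add b1 b2
    _ = (t₁ ^ (p-1) + t₂ ^ (p-1)) * (max (t₁ ^ p) (t₂ ^ p)) ^ j := by ring


/-- the GFD of Riemann–Liouville type of a convolution series. -/
theorem gfdRL_of_convolution_series
    (κ k : ℝ → ℝ) (h : SoninePairL1 κ k) (b : ℕ → ℝ) (hb : PosRadius b) :
    ∀ t, 0 < t →
      HasDerivAt (lconv k (fun s => ∑' j, b j * convNPow κ j s))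
        (∑' j, b (j + 1) * convNPow κ j t) t := by
  intro t ht
  obtain ⟨⟨p, κ₁, hp, hp1, hκ₁c, hκf⟩, ⟨q, k₁, hq, hq1, hk₁c, hkf⟩, hson⟩ := h
  obtain ⟨r, hr, hbr⟩ := hb
  set T : ℝ := t + 1 with hTdef
  have hT : 0 < T := by rw [hTdef]; linarith
  have htT : t < T := by rw [hTdef]; linarith
  -- bound for κ
  obtain ⟨M₀, hM₀⟩ := (isCompact_Icc (a := (0:ℝ)) (b := T)).exists_bound_of_continuousOn
    (hκ₁c.mono (fun x hx => hx.1))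
  set M : ℝ := max M₀ 0 with hMdef
  have hM : 0 ≤ M := le_max_right _ _
  have hκb : ∀ s ∈ Ioc (0:ℝ) T, |κ s| ≤ M * s ^ (p-1) := by
    intro s hs
    rw [hκf s hs.1, abs_mul, abs_of_nonneg (Real.rpow_nonneg hs.1.le _)]
    have h1 : |κ₁ s| ≤ M := le_trans (hM₀ s ⟨hs.1.le, hs.2⟩) (le_max_left _ _)
    calc s ^ (p-1) * |κ₁ s| ≤ s ^ (p-1) * M :=
          mul_le_mul_of_nonneg_left h1 (Real.rpow_nonneg hs.1.le _)
      _ = M * s ^ (p-1) := mul_comm _ _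
  have hκc : ContinuousOn κ (Set.Ioi 0) := by
    have hcc : ContinuousOn (fun s : ℝ => s ^ (p-1) * κ₁ s) (Set.Ioi 0) :=
      ContinuousOn.mul
        (fun s hs => (Real.continuousAt_rpow_const s (p-1) (Or.inl (ne_of_gt hs))).continuousWithinAt)
        (hκ₁c.mono (fun x hx => mem_Ici.2 (le_of_lt hx)))
    exact hcc.congr (fun s hs => hκf s hs)
  -- bound for k
  obtain ⟨N₀, hN₀⟩ := (isCompact_Icc (a := (0:ℝ)) (b := T)).exists_bound_of_continuousOn
    (hk₁c.mono (fun x hx => hx.1))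
  set N : ℝ := max N₀ 0 with hNdef
  have hN : 0 ≤ N := le_max_right _ _
  have hkb : ∀ s ∈ Ioc (0:ℝ) T, |k s| ≤ N * s ^ (q-1) := by
    intro s hs
    rw [hkf s hs.1, abs_mul, abs_of_nonneg (Real.rpow_nonneg hs.1.le _)]
    have h1 : |k₁ s| ≤ N := le_trans (hN₀ s ⟨hs.1.le, hs.2⟩) (le_max_left _ _)
    calc s ^ (q-1) * |k₁ s| ≤ s ^ (q-1) * N :=
          mul_le_mul_of_nonneg_left h1 (Real.rpow_nonneg hs.1.le _)
      _ = N * s ^ (q-1) := mul_comm _ _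
  have hkc : ContinuousOn k (Set.Ioi 0) := by
    have hcc : ContinuousOn (fun s : ℝ => s ^ (q-1) * k₁ s) (Set.Ioi 0) :=
      ContinuousOn.mul
        (fun s hs => (Real.continuousAt_rpow_const s (q-1) (Or.inl (ne_of_gt hs))).continuousWithinAt)
        (hk₁c.mono (fun x hx => mem_Ici.2 (le_of_lt hx)))
    exact hcc.congr (fun s hs => hkf s hs)
  have hson' : ∀ u : ℝ, 0 < u → lconv k κ u = 1 := by
    intro u hu
    rw [lconv_comm]
    exact hson u hu
  -- convolution power facts
  have hP := convNPow_prop hp hT hM hκc hκb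
  have hPc : ∀ n, ContinuousOn (convNPow κ n) (Ioo 0 T) := fun n => (hP n).1
  have hPb : ∀ n, ∀ s ∈ Ioc (0:ℝ) T, |convNPow κ n s| ≤ Kco M p n * s ^ (((n:ℝ)+1)*p - 1) :=
    fun n => (hP n).2
  set y : ℝ → ℝ := fun s => ∑' j, b j * convNPow κ j s with hydef
  set z : ℝ → ℝ := fun s => ∑' j, b (j+1) * convNPow κ j s with hzdef
  show HasDerivAt (lconv k y) (z t) t
  -- continuity of z on Ioo 0 T
  have hzc : ContinuousOn z (Ioo 0 T) := by
    intro x hx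
    refine ContinuousAt.continuousWithinAt ?_
    set t₁ : ℝ := x/2 with ht₁def
    set t₂ : ℝ := (x+T)/2 with ht₂def
    have h10 : 0 < t₁ := by rw [ht₁def]; linarith [hx.1]
    have h12 : t₁ ≤ t₂ := by rw [ht₁def, ht₂def]; linarith [hx.1, hx.2]
    have h2T : t₂ < T := by rw [ht₂def]; linarith [hx.2]
    have hxin : x ∈ Ioo t₁ t₂ := by
      constructor
      · rw [ht₁def]; linarith [hx.1]
      · rw [ht₂def]; linarith [hx.2]
    have hsub : Ioo t₁ t₂ ⊆ Ioo (0:ℝ) T :=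
      fun u hu => ⟨lt_trans h10 hu.1, lt_trans hu.2 h2T⟩
    have hcO : ContinuousOn z (Ioo t₁ t₂) := by
      refine continuousOn_tsum (fun j => ?_) (u := fun j =>
        |b (j+1)| * Kco M p j * ((t₁ ^ (p-1) + t₂ ^ (p-1)) * (max (t₁ ^ p) (t₂ ^ p)) ^ j))
        ?_ (fun j u hu => ?_)
      · exact continuousOn_const.mul ((hPc j).mono hsub)
      · refine summable_main hp hp1 hM hr hbr 1
          (hc := lt_max_of_lt_left (Real.rpow_pos_of_pos h10 p)) (fun n => ?_) (fun n => le_refl _)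
        have h1 := Real.rpow_nonneg h10.le (p-1)
        have h2 := Real.rpow_nonneg (lt_of_lt_of_le h10 h12).le (p-1)
        positivity
      · have hb1 := hPb j u ⟨lt_trans h10 hu.1, le_of_lt (lt_trans hu.2 h2T)⟩
        have hb2 := sum_dom (p := p) h10 h12 j u ⟨hu.1.le, hu.2.le⟩
        calc ‖b (j+1) * convNPow κ j u‖ = |b (j+1)| * |convNPow κ j u| := abs_mul _ _
          _ ≤ |b (j+1)| * (Kco M p j * u ^ (((j:ℝ)+1)*p - 1)) :=
              mul_le_mul_of_nonneg_left hb1 (abs_nonneg _)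
          _ ≤ |b (j+1)| * (Kco M p j * ((t₁ ^ (p-1) + t₂ ^ (p-1)) * (max (t₁ ^ p) (t₂ ^ p)) ^ j)) := by
              refine mul_le_mul_of_nonneg_left ?_ (abs_nonneg _)
              exact mul_le_mul_of_nonneg_left hb2 (Kco_nonneg p hM j)
          _ = |b (j+1)| * Kco M p j * ((t₁ ^ (p-1) + t₂ ^ (p-1)) * (max (t₁ ^ p) (t₂ ^ p)) ^ j) := by
              ring
    exact hcO.continuousAt (Ioo_mem_nhds hxin.1 hxin.2)
  -- geometric constant
  set cT : ℝ := max 1 (T ^ p) with hcTdef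
  have hcT : 0 < cT := lt_max_of_lt_left one_pos
  have htermb : ∀ (u : ℝ), u ∈ Ioc (0:ℝ) T → ∀ j : ℕ,
      |convNPow κ j u| ≤ Kco M p j * (u ^ (p-1) * cT ^ j) := by
    intro u hu j
    have h1 := hPb j u hu
    have h2 : u ^ (((j:ℝ)+1)*p - 1) ≤ u ^ (p-1) * cT ^ j := by
      have e : ((j:ℝ)+1)*p - 1 = (p-1) + p * (j:ℝ) := by ring
      rw [e, geom_split hu.1]
      refine mul_le_mul_of_nonneg_left ?_ (Real.rpow_nonneg hu.1.le _)
      refine pow_le_pow_left₀ (Real.rpow_nonneg hu.1.le _) ?_ j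
      exact le_trans (Real.rpow_le_rpow hu.1.le hu.2 hp.le) (le_max_right _ _)
    calc |convNPow κ j u| ≤ Kco M p j * u ^ (((j:ℝ)+1)*p - 1) := h1
      _ ≤ Kco M p j * (u ^ (p-1) * cT ^ j) :=
          mul_le_mul_of_nonneg_left h2 (Kco_nonneg p hM j)
  -- the sum Z bounding z
  set Z : ℝ := ∑' j, |b (j+1)| * Kco M p j * cT ^ j with hZdef
  have hZsum : Summable (fun j => |b (j+1)| * Kco M p j * cT ^ j) :=
    summable_main hp hp1 hM hr hbr 1 hcT (fun n => by positivity) (fun n => by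
      rw [one_mul])
  have hzsummable : ∀ u ∈ Ioc (0:ℝ) T, Summable (fun j => b (j+1) * convNPow κ j u) := by
    intro u hu
    refine Summable.of_norm_bounded (g := fun j => |b (j+1)| * Kco M p j * (u ^ (p-1) * cT ^ j)) ?_ (fun j => ?_)
    · exact (summable_main hp hp1 hM hr hbr 1 hcT
        (w := fun j => u ^ (p-1) * cT ^ j) (fun n => by
          have := Real.rpow_nonneg hu.1.le (p-1); positivity)
        (fun n => le_of_eq rfl))
    · calc ‖b (j+1) * convNPow κ j u‖ = |b (j+1)| * |convNPow κ j u| := abs_mul _ _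
        _ ≤ |b (j+1)| * (Kco M p j * (u ^ (p-1) * cT ^ j)) :=
            mul_le_mul_of_nonneg_left (htermb u hu j) (abs_nonneg _)
        _ = |b (j+1)| * Kco M p j * (u ^ (p-1) * cT ^ j) := by ring
  have hzbound : ∀ u ∈ Ioc (0:ℝ) T, ‖z u‖ ≤ Z * u ^ (p-1) := by
    intro u hu
    have hs1 : Summable (fun j => ‖b (j+1) * convNPow κ j u‖) := by
      refine Summable.of_nonneg_of_le (fun j => norm_nonneg _) (fun j => ?_)
        ((summable_main hp hp1 hM hr hbr 1 hcT
          (w := fun j => u ^ (p-1) * cT ^ j) (fun n => by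
            have := Real.rpow_nonneg hu.1.le (p-1); positivity)
          (fun n => le_of_eq rfl)))
      calc ‖b (j+1) * convNPow κ j u‖ = |b (j+1)| * |convNPow κ j u| := abs_mul _ _
        _ ≤ |b (j+1)| * (Kco M p j * (u ^ (p-1) * cT ^ j)) :=
            mul_le_mul_of_nonneg_left (htermb u hu j) (abs_nonneg _)
        _ = |b (j+1)| * Kco M p j * (u ^ (p-1) * cT ^ j) := by ring
    calc ‖z u‖ ≤ ∑' j, ‖b (j+1) * convNPow κ j u‖ := norm_tsum_le_tsum_norm hs1
      _ ≤ ∑' j, (|b (j+1)| * Kco M p j * cT ^ j) * u ^ (p-1) := by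
          refine hs1.tsum_le_tsum (fun j => ?_) (hZsum.mul_right _)
          calc ‖b (j+1) * convNPow κ j u‖ = |b (j+1)| * |convNPow κ j u| := abs_mul _ _
            _ ≤ |b (j+1)| * (Kco M p j * (u ^ (p-1) * cT ^ j)) :=
                mul_le_mul_of_nonneg_left (htermb u hu j) (abs_nonneg _)
            _ = (|b (j+1)| * Kco M p j * cT ^ j) * u ^ (p-1) := by ring
      _ = Z * u ^ (p-1) := by rw [hZdef, tsum_mul_right]
  -- key identity
  have hkey : ∀ s ∈ Ioo (0:ℝ) T, lconv k y s = b 0 + ∫ u in (0:ℝ)..s, z u := by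
    intro s hs
    obtain ⟨hs0, hsT⟩ := hs
    set F : ℕ → ℝ → ℝ := fun j τ => k (s - τ) * (b j * convNPow κ j τ) with hFdef
    have hfc' : ∀ j : ℕ, ContinuousOn (fun τ => b j * convNPow κ j τ) (Ioo 0 T) :=
      fun j => continuousOn_const.mul (hPc j)
    have hfb' : ∀ j : ℕ, ∀ u ∈ Ioc (0:ℝ) T,
        |b j * convNPow κ j u| ≤ (|b j| * Kco M p j) * u ^ ((((j:ℕ):ℝ)+1)*p - 1) := by
      intro j u hu
      rw [abs_mul]
      calc |b j| * |convNPow κ j u| ≤ |b j| * (Kco M p j * u ^ (((j:ℝ)+1)*p - 1)) :=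
            mul_le_mul_of_nonneg_left (hPb j u hu) (abs_nonneg _)
        _ = (|b j| * Kco M p j) * u ^ (((j:ℝ)+1)*p - 1) := by ring
    have haj : ∀ j : ℕ, (0:ℝ) < ((j:ℝ)+1)*p := fun j => by positivity
    have hCj : ∀ j : ℕ, (0:ℝ) ≤ |b j| * Kco M p j :=
      fun j => mul_nonneg (abs_nonneg _) (Kco_nonneg p hM j)
    have hFint : ∀ j : ℕ, Integrable (F j) (volume.restrict (Ioc (0:ℝ) s)) := by
      intro j
      have := conv_integrand_integrable (κ := k) (p := q) (M := N) (T := T) hq hkc hkb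
        (haj j) (hCj j) hN (hfc' j) (hfb' j) ⟨hs0, hsT.le⟩
      rwa [intervalIntegrable_iff_integrableOn_Ioc_of_le hs0.le] at this
    set B : ℕ → ℝ := fun j => |b j| * Kco M p j *
      (N * betaI (((j:ℝ)+1)*p) q * s ^ ((((j:ℝ)+1)*p) + q - 1)) with hBdef
    have hFnorm : ∀ j : ℕ, (∫ τ in Ioc (0:ℝ) s, ‖F j τ‖) ≤ B j := by
      intro j
      have hκmb : ∀ u ∈ Ioo (0:ℝ) T, |k u| ≤ N * u ^ (q-1) :=
        fun u hu => hkb u ⟨hu.1, hu.2.le⟩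
      have hfmb : ∀ u ∈ Ioo (0:ℝ) T,
          |b j * convNPow κ j u| ≤ (|b j| * Kco M p j) * u ^ ((((j:ℕ):ℝ)+1)*p - 1) :=
        fun u hu => hfb' j u ⟨hu.1, hu.2.le⟩
      have := conv_abs_bound (p := q) (a := ((j:ℝ)+1)*p) (M := N) (C := |b j| * Kco M p j)
        hq (haj j) hN (hCj j) hκmb hfmb hs0 hsT
      calc (∫ τ in Ioc (0:ℝ) s, ‖F j τ‖) ≤
          (N * (|b j| * Kco M p j) * betaI (((j:ℝ)+1)*p) q) * s ^ ((((j:ℝ)+1)*p) + q - 1) :=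
            this
        _ = B j := by rw [hBdef]; ring
    have hBsum : Summable B := by
      rw [hBdef]
      refine summable_main hp hp1 hM hr hbr 0
        (hc := Real.rpow_pos_of_pos hs0 p)
        (A := N * betaI p q * s ^ (p + q - 1))
        (fun n => by
          have := betaI_nonneg (a := ((n:ℝ)+1)*p) (b := q)
          have := Real.rpow_nonneg hs0.le ((((n:ℝ)+1)*p) + q - 1)
          positivity)
        (fun n => ?_)
      have hβ : betaI (((n:ℝ)+1)*p) q ≤ betaI p q := by
        refine betaI_mono_left hp ?_ hq
        nlinarith [Nat.cast_nonneg (α := ℝ) n]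
      have hspow : s ^ ((((n:ℝ)+1)*p) + q - 1) = s ^ (p + q - 1) * (s ^ p) ^ n := by
        rw [show (((n:ℝ)+1)*p) + q - 1 = (p + q - 1) + p * (n:ℝ) by ring, geom_split hs0]
      rw [hspow]
      have h1 : 0 ≤ s ^ (p+q-1) * (s ^ p) ^ n := by positivity
      calc N * betaI (((n:ℝ)+1)*p) q * (s ^ (p+q-1) * (s ^ p) ^ n)
          ≤ N * betaI p q * (s ^ (p+q-1) * (s ^ p) ^ n) :=
            mul_le_mul_of_nonneg_right (mul_le_mul_of_nonneg_left hβ hN) h1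
        _ = N * betaI p q * s ^ (p+q-1) * (s ^ p) ^ n := by ring
    have hFnormSum : Summable (fun j => ∫ τ in Ioc (0:ℝ) s, ‖F j τ‖) :=
      Summable.of_nonneg_of_le
        (fun j => integral_nonneg (fun τ => norm_nonneg _)) hFnorm hBsum
    -- first interchange
    have h1 : lconv k y s = ∑' j, ∫ τ in Ioc (0:ℝ) s, F j τ := by
      show (∫ τ in (0:ℝ)..s, k (s - τ) * y τ) = _
      rw [intervalIntegral.integral_of_le hs0.le,
        MeasureTheory.integral_tsum_of_summable_integral_norm hFint hFnormSum]
      refine integral_congr_ae (Eventually.of_forall (fun τ => ?_))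
      exact (tsum_mul_left (a := k (s - τ))).symm
    set g : ℕ → ℝ := fun j => b j * lconv k (convNPow κ j) s with hgdef
    have h2 : ∀ j : ℕ, (∫ τ in Ioc (0:ℝ) s, F j τ) = g j := by
      intro j
      have he : ∀ τ : ℝ, F j τ = b j * (k (s-τ) * convNPow κ j τ) := fun τ => by
        rw [hFdef]; ring
      simp_rw [he]
      rw [MeasureTheory.integral_const_mul]
      show b j * (∫ τ in Ioc (0:ℝ) s, k (s-τ) * convNPow κ j τ)
        = b j * lconv k (convNPow κ j) s
      rw [show lconv k (convNPow κ j) s = ∫ τ in (0:ℝ)..s, k (s-τ) * convNPow κ j τ from rfl,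
        intervalIntegral.integral_of_le hs0.le]
    have hgsum : Summable g := by
      refine Summable.of_norm_bounded (g := B) hBsum (fun j => ?_)
      rw [← h2 j]
      exact le_trans (norm_integral_le_integral_norm _) (hFnorm j)
    have hconv0 : lconv k (convNPow κ 0) s = 1 := hson' s hs0
    have hconvS : ∀ j : ℕ, lconv k (convNPow κ (j+1)) s = ∫ u in (0:ℝ)..s, convNPow κ j u := by
      intro j
      exact lconv_assoc_sonine hp hq (haj j) hT hM hN (Kco_nonneg p hM j)
        hκc hκb hkc hkb (hPc j) (hPb j) hson' ⟨hs0, hsT⟩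
    -- second interchange
    set G : ℕ → ℝ → ℝ := fun j u => b (j+1) * convNPow κ j u with hGdef
    have hGdom : ∀ j : ℕ, IntegrableOn
        (fun u : ℝ => (|b (j+1)| * Kco M p j) * u ^ ((((j:ℕ):ℝ)+1)*p - 1)) (Ioc 0 s) volume := by
      intro j
      have := (intervalIntegral.intervalIntegrable_rpow'
        (a := (0:ℝ)) (b := s) (r := ((j:ℝ)+1)*p - 1) (by nlinarith [haj j])).const_mul
        (|b (j+1)| * Kco M p j)
      rwa [intervalIntegrable_iff_integrableOn_Ioc_of_le hs0.le] at this
    have hGint : ∀ j : ℕ, Integrable (G j) (volume.restrict (Ioc (0:ℝ) s)) := by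
      intro j
      refine Integrable.mono' (hGdom j) ?_ ?_
      · rw [show volume.restrict (Ioc (0:ℝ) s) = volume.restrict (Ioo (0:ℝ) s) from
          (Measure.restrict_congr_set Ioo_ae_eq_Ioc).symm]
        refine ContinuousOn.aestronglyMeasurable ?_ measurableSet_Ioo
        exact (continuousOn_const.mul
          ((hPc j).mono (fun u hu => ⟨hu.1, lt_trans hu.2 hsT⟩)))
      · rw [show volume.restrict (Ioc (0:ℝ) s) = volume.restrict (Ioo (0:ℝ) s) from
          (Measure.restrict_congr_set Ioo_ae_eq_Ioc).symm]
        refine (ae_restrict_iff' measurableSet_Ioo).2 (Eventually.of_forall fun u hu => ?_)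
        have hu' : u ∈ Ioc (0:ℝ) T := ⟨hu.1, by linarith [hu.2]⟩
        calc ‖G j u‖ = |b (j+1)| * |convNPow κ j u| := abs_mul _ _
          _ ≤ |b (j+1)| * (Kco M p j * u ^ (((j:ℝ)+1)*p - 1)) :=
              mul_le_mul_of_nonneg_left (hPb j u hu') (abs_nonneg _)
          _ = (|b (j+1)| * Kco M p j) * u ^ (((j:ℝ)+1)*p - 1) := by ring
    have hGnorm : ∀ j : ℕ, (∫ u in Ioc (0:ℝ) s, ‖G j u‖) ≤
        |b (j+1)| * Kco M p j * ((1/p) * s ^ p * (s ^ p) ^ j) := by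
      intro j
      have hval : (∫ u in Ioc (0:ℝ) s, (|b (j+1)| * Kco M p j) * u ^ (((j:ℝ)+1)*p - 1))
          = (|b (j+1)| * Kco M p j) * (s ^ (((j:ℝ)+1)*p) / (((j:ℝ)+1)*p)) := by
        rw [← intervalIntegral.integral_of_le hs0.le, intervalIntegral.integral_const_mul,
          integral_rpow (Or.inl (by nlinarith [haj j] : (-1:ℝ) < ((j:ℝ)+1)*p - 1))]
        rw [Real.zero_rpow (by nlinarith [haj j] : ((j:ℝ)+1)*p - 1 + 1 ≠ 0),
          show ((j:ℝ)+1)*p - 1 + 1 = ((j:ℝ)+1)*p by ring]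
        ring
      have hle : (∫ u in Ioc (0:ℝ) s, ‖G j u‖) ≤
          ∫ u in Ioc (0:ℝ) s, (|b (j+1)| * Kco M p j) * u ^ (((j:ℝ)+1)*p - 1) := by
        refine integral_mono_of_nonneg (Eventually.of_forall fun u => norm_nonneg _)
          (hGdom j) ?_
        rw [show volume.restrict (Ioc (0:ℝ) s) = volume.restrict (Ioo (0:ℝ) s) from
          (Measure.restrict_congr_set Ioo_ae_eq_Ioc).symm]
        refine (ae_restrict_iff' measurableSet_Ioo).2 (Eventually.of_forall fun u hu => ?_)
        have hu' : u ∈ Ioc (0:ℝ) T := ⟨hu.1, by linarith [hu.2]⟩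
        calc ‖G j u‖ = |b (j+1)| * |convNPow κ j u| := abs_mul _ _
          _ ≤ |b (j+1)| * (Kco M p j * u ^ (((j:ℝ)+1)*p - 1)) :=
              mul_le_mul_of_nonneg_left (hPb j u hu') (abs_nonneg _)
          _ = (|b (j+1)| * Kco M p j) * u ^ (((j:ℝ)+1)*p - 1) := by ring
      have hfin : (|b (j+1)| * Kco M p j) * (s ^ (((j:ℝ)+1)*p) / (((j:ℝ)+1)*p)) ≤
          |b (j+1)| * Kco M p j * ((1/p) * s ^ p * (s ^ p) ^ j) := by
        have e : s ^ (((j:ℝ)+1)*p) = s ^ p * (s ^ p) ^ j := by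
          rw [show ((j:ℝ)+1)*p = p + p * (j:ℝ) by ring, geom_split hs0]
        rw [e]
        refine mul_le_mul_of_nonneg_left ?_
          (mul_nonneg (abs_nonneg _) (Kco_nonneg p hM j))
        rw [div_le_iff₀ (haj j)]
        have h1 : (0:ℝ) ≤ s ^ p * (s ^ p) ^ j := by positivity
        have h2 : (1:ℝ)/p * (((j:ℝ)+1)*p) ≥ 1 := by
          rw [ge_iff_le, show (1:ℝ)/p * (((j:ℝ)+1)*p) = ((j:ℝ)+1) * (p/p) by ring,
            div_self hp.ne']
          simp
        nlinarith
      exact le_trans hle (le_of_eq hval |>.trans hfin)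
    have hGnormSum : Summable (fun j => ∫ u in Ioc (0:ℝ) s, ‖G j u‖) := by
      refine Summable.of_nonneg_of_le
        (fun j => integral_nonneg (fun u => norm_nonneg _)) hGnorm ?_
      refine summable_main hp hp1 hM hr hbr 1 (hc := Real.rpow_pos_of_pos hs0 p)
        (A := (1/p) * s ^ p)
        (fun n => by positivity) (fun n => le_of_eq (by ring))
    have h5 : (∑' j, ∫ u in Ioc (0:ℝ) s, G j u) = ∫ u in (0:ℝ)..s, z u := by
      rw [MeasureTheory.integral_tsum_of_summable_integral_norm hGint hGnormSum,
        intervalIntegral.integral_of_le hs0.le]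
    have h6 : ∀ j : ℕ, g (j+1) = ∫ u in Ioc (0:ℝ) s, G j u := by
      intro j
      rw [hgdef]
      show b (j+1) * lconv k (convNPow κ (j+1)) s = _
      rw [hconvS j, hGdef]
      rw [intervalIntegral.integral_of_le hs0.le, MeasureTheory.integral_const_mul]
    calc lconv k y s = ∑' j, ∫ τ in Ioc (0:ℝ) s, F j τ := h1
      _ = ∑' j, g j := tsum_congr h2
      _ = g 0 + ∑' j, g (j+1) := Summable.tsum_eq_zero_add hgsum
      _ = b 0 + ∑' j, ∫ u in Ioc (0:ℝ) s, G j u := by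
          rw [tsum_congr h6, hgdef]
          show b 0 * lconv k (convNPow κ 0) s + _ = _
          rw [hconv0, mul_one]
      _ = b 0 + ∫ u in (0:ℝ)..s, z u := by rw [h5]
  -- FTC
  have hzint : IntervalIntegrable z volume 0 t := by
    rw [intervalIntegrable_iff_integrableOn_Ioc_of_le ht.le]
    have hdom : IntegrableOn (fun u : ℝ => Z * u ^ (p-1)) (Ioc 0 t) volume := by
      have := (intervalIntegral.intervalIntegrable_rpow'
        (a := (0:ℝ)) (b := t) (r := p - 1) (by linarith)).const_mul Z
      rwa [intervalIntegrable_iff_integrableOn_Ioc_of_le ht.le] at this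
    refine Integrable.mono' hdom ?_ ?_
    · rw [show volume.restrict (Ioc (0:ℝ) t) = volume.restrict (Ioo (0:ℝ) t) from
        (Measure.restrict_congr_set Ioo_ae_eq_Ioc).symm]
      exact (hzc.mono (fun u hu => ⟨hu.1, lt_trans hu.2 htT⟩)).aestronglyMeasurable
        measurableSet_Ioo
    · rw [show volume.restrict (Ioc (0:ℝ) t) = volume.restrict (Ioo (0:ℝ) t) from
        (Measure.restrict_congr_set Ioo_ae_eq_Ioc).symm]
      refine (ae_restrict_iff' measurableSet_Ioo).2 (Eventually.of_forall fun u hu => ?_)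
      exact hzbound u ⟨hu.1, by linarith [hu.2]⟩
  have hzCt : ContinuousAt z t := (hzc.continuousAt (Ioo_mem_nhds ht htT))
  have hzmeasAt : StronglyMeasurableAtFilter z (nhds t) :=
    ContinuousOn.stronglyMeasurableAtFilter isOpen_Ioo hzc t ⟨ht, htT⟩
  have hder : HasDerivAt (fun s => ∫ u in (0:ℝ)..s, z u) (z t) t :=
    intervalIntegral.integral_hasDerivAt_right hzint hzmeasAt hzCt
  have hder2 : HasDerivAt (fun s => b 0 + ∫ u in (0:ℝ)..s, z u) (z t) t :=
    hder.const_add (b 0)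
  refine hder2.congr_of_eventuallyEq ?_
  filter_upwards [Ioo_mem_nhds ht htT] with s hs
  exact hkey s hs
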